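/- arXiv:1705.03046 — 2 statements merged into one kernel-verified Lean document; each statement's English description precedes it below -/
import Mathlib

section
/- For a bounded open set Ω ⊂ ℝⁿ with inradius r_Ω, the infimum of the Lipschitz constants of functions u : Ω̄ → ℝ vanishing on ∂Ω with sup_Ω |u| = 1 equals 1/r_Ω, and it is attained by u(x) = dist(x, ∂Ω)/r_Ω. -/
/-!
A `K`-Lipschitz function vanishing on `∂Ω` satisfies `|u x| ≤ K * dist(x, ∂Ω) ≤ K * rΩ`, so
`sup_Ω |u| = 1` forces `K ≥ 1 / rΩ`. Conversely `dist(·, ∂Ω) / rΩ` is `1 / rΩ`-Lipschitz,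
vanishes on `∂Ω`, and its supremum over `Ω` is `rΩ / rΩ = 1`.
-/

namespace Real

variable {α : Type*}

lemma le_biSup_of_pos {f : α → ℝ} {s : Set α} (h : 0 < ⨆ x ∈ s, f x) {x : α} (hx : x ∈ s) :
    f x ≤ ⨆ x ∈ s, f x := by
  -- an unbounded supremum would take the junk value `0`
  have hbdd : BddAbove (Set.range fun x => ⨆ _ : x ∈ s, f x) := by
    by_contra hb
    exact h.ne' (iSup_of_not_bddAbove hb)
  simpa only [ciSup_pos hx] using le_ciSup hbdd x

end Real

namespace Metric

variable {α : Type*} [PseudoMetricSpace α]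

lemma nonempty_of_biSup_infDist_pos {s F : Set α} (h : 0 < ⨆ x ∈ s, infDist x F) :
    F.Nonempty := by
  rw [Set.nonempty_iff_ne_empty]
  rintro rfl
  simp [infDist_empty] at h

lemma lipschitzWith_infDist_div {F : Set α} {r : ℝ} (hr : 0 ≤ r) :
    LipschitzWith (1 / r).toNNReal (fun x => infDist x F / r) := by
  refine LipschitzWith.of_dist_le_mul fun x y => ?_
  rw [Real.dist_eq, ← sub_div, abs_div, abs_of_nonneg hr, Real.coe_toNNReal _ (by positivity),
    one_div_mul_eq_div]
  gcongr
  simpa [Real.dist_eq] using (lipschitz_infDist_pt (s := F)).dist_le_mul x y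

lemma abs_le_mul_infDist_of_lipschitzOnWith {t F : Set α} {u : α → ℝ} {K : NNReal}
    (hu : LipschitzOnWith K u t) (hFt : F ⊆ t) (hu0 : ∀ y ∈ F, u y = 0) (hF : F.Nonempty)
    {x : α} (hx : x ∈ t) : |u x| ≤ K * infDist x F := by
  have : Nonempty F := hF.to_subtype
  rw [infDist_eq_iInf, Real.mul_iInf_of_nonneg K.coe_nonneg]
  refine le_ciInf fun ⟨y, hy⟩ => ?_
  simpa [Real.dist_eq, hu0 y hy] using hu.dist_le_mul x hx y (hFt hy)

lemma biSup_abs_infDist_div {s F : Set α} {r : ℝ} (hr : 0 ≤ r) :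
    ⨆ x ∈ s, |infDist x F / r| = (⨆ x ∈ s, infDist x F) / r := by
  have habs (x : α) : |infDist x F / r| = infDist x F / r :=
    abs_of_nonneg (div_nonneg infDist_nonneg hr)
  simp only [habs]
  simp only [div_eq_mul_inv, Real.iSup_mul_of_nonneg (inv_nonneg.2 hr)]

lemma biSup_abs_le_mul_biSup_infDist {s t F : Set α} {u : α → ℝ} {K : NNReal}
    (hu : LipschitzOnWith K u t) (hst : s ⊆ t) (hFt : F ⊆ t) (hu0 : ∀ y ∈ F, u y = 0)
    (hpos : 0 < ⨆ x ∈ s, infDist x F) :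
    ⨆ x ∈ s, |u x| ≤ K * ⨆ x ∈ s, infDist x F := by
  have hF := nonempty_of_biSup_infDist_pos hpos
  refine Real.iSup_le (fun x => Real.iSup_le (fun hx => ?_) (by positivity)) (by positivity)
  calc |u x| ≤ K * infDist x F := abs_le_mul_infDist_of_lipschitzOnWith hu hFt hu0 hF (hst hx)
    _ ≤ K * ⨆ x ∈ s, infDist x F := by gcongr; exact Real.le_biSup_of_pos hpos hx

end Metric

open Metric

theorem stmt10_general (n : ℕ) (Ω : Set (EuclideanSpace ℝ (Fin n)))
    (rΩ : ℝ) (hrΩ : rΩ = ⨆ x ∈ Ω, infDist x (frontier Ω)) (hrΩpos : 0 < rΩ) :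
    IsLeast
      {L : ℝ | 0 ≤ L ∧
        ∃ u : EuclideanSpace ℝ (Fin n) → ℝ,
          LipschitzOnWith (Real.toNNReal L) u (closure Ω) ∧
          (∀ x ∈ frontier Ω, u x = 0) ∧
          (⨆ x ∈ Ω, |u x|) = 1}
      (1 / rΩ) ∧
    LipschitzOnWith (Real.toNNReal (1 / rΩ))
      (fun x => infDist x (frontier Ω) / rΩ) (closure Ω) ∧
    (∀ x ∈ frontier Ω, infDist x (frontier Ω) / rΩ = 0) ∧
    (⨆ x ∈ Ω, |infDist x (frontier Ω) / rΩ|) = 1 := by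
  have hlip := (lipschitzWith_infDist_div (F := frontier Ω) hrΩpos.le).lipschitzOnWith
    (s := closure Ω)
  have hvanish (x) (hx : x ∈ frontier Ω) : infDist x (frontier Ω) / rΩ = 0 := by
    rw [infDist_zero_of_mem hx, zero_div]
  have hsup : ⨆ x ∈ Ω, |infDist x (frontier Ω) / rΩ| = 1 := by
    rw [biSup_abs_infDist_div hrΩpos.le, ← hrΩ, div_self hrΩpos.ne']
  refine ⟨⟨⟨by positivity, _, hlip, hvanish, hsup⟩, ?_⟩, hlip, hvanish, hsup⟩
  rintro L ⟨hL0, u, hu, hu0, husup⟩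
  have hbound := biSup_abs_le_mul_biSup_infDist hu subset_closure frontier_subset_closure hu0
    (hrΩ ▸ hrΩpos)
  rw [husup, ← hrΩ, Real.coe_toNNReal _ hL0] at hbound
  rwa [div_le_iff₀ hrΩpos]

/-- For a bounded open nonempty `Ω ⊂ ℝⁿ` with inradius `rΩ > 0`, the value `1/rΩ` is the
least Lipschitz constant among functions on `closure Ω` vanishing on `∂Ω` with
`sup_Ω |u| = 1`; it is attained by `u x = infDist x (frontier Ω) / rΩ`. -/
theorem stmt10 (n : ℕ) (Ω : Set (EuclideanSpace ℝ (Fin n)))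
    (hΩopen : IsOpen Ω) (hΩbdd : Bornology.IsBounded Ω) (hΩne : Ω.Nonempty)
    (rΩ : ℝ) (hrΩ : rΩ = ⨆ x ∈ Ω, infDist x (frontier Ω)) (hrΩpos : 0 < rΩ) :
    IsLeast
      {L : ℝ | 0 ≤ L ∧
        ∃ u : EuclideanSpace ℝ (Fin n) → ℝ,
          LipschitzOnWith (Real.toNNReal L) u (closure Ω) ∧
          (∀ x ∈ frontier Ω, u x = 0) ∧
          (⨆ x ∈ Ω, |u x|) = 1}
      (1 / rΩ) ∧
    LipschitzOnWith (Real.toNNReal (1 / rΩ))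
      (fun x => infDist x (frontier Ω) / rΩ) (closure Ω) ∧
    (∀ x ∈ frontier Ω, infDist x (frontier Ω) / rΩ = 0) ∧
    (⨆ x ∈ Ω, |infDist x (frontier Ω) / rΩ|) = 1 :=
  stmt10_general n Ω rΩ hrΩ hrΩpos
end

section
/- Let E = {x ∈ ℝⁿ : Σᵢ (xᵢ/aᵢ)² < 1} be an open ellipsoid with semi-axes a₁, …, aₙ > 0. Then the inradius of E (the supremum over x ∈ E of dist(x, ∂E)) equals minᵢ aᵢ. -/
/-!
A point `x` of the ellipsoid has `|x j| < a j`, so moving it along the `j`-th axis onto the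
hyperplanes `x j = a j` and `x j = -a j` leaves the ellipsoid after distances `a j - x j` and
`a j + x j`; their mean is `a j`, hence `infDist x Eᶜ ≤ a j`. Conversely
`∑ (y i / a i)² ≤ ‖y‖² / (min a)²`, so the ball of radius `min a` about the centre lies in the
ellipsoid, and the centre realises the bound.
-/

open Metric

section

variable {ι : Type*} [Fintype ι]

def ellipsoid (a : ι → ℝ) : Set (EuclideanSpace ℝ ι) := {x | ∑ i, (x i / a i) ^ 2 < 1}

variable {a : ι → ℝ} {x : EuclideanSpace ℝ ι}

theorem abs_lt_of_mem_ellipsoid {j : ι} (hj : 0 < a j) (hx : x ∈ ellipsoid a) : |x j| < a j := by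
  have hsq : (x j / a j) ^ 2 < 1 :=
    (Finset.single_le_sum (fun i _ ↦ sq_nonneg (x i / a i)) (Finset.mem_univ j)).trans_lt hx
  rwa [sq_lt_one_iff_abs_lt_one, abs_div, abs_of_pos hj, div_lt_one hj] at hsq

theorem infDist_compl_ellipsoid_le {j : ι} (hj : 0 < a j) (hx : x ∈ ellipsoid a) :
    infDist x (ellipsoid a)ᶜ ≤ a j := by
  classical
  obtain ⟨hlo, hhi⟩ := abs_lt.mp (abs_lt_of_mem_ellipsoid hj hx)
  have hout : ∀ y : EuclideanSpace ℝ ι, |y j| = a j → y ∈ (ellipsoid a)ᶜ :=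
    fun y hy hyE ↦ (abs_lt_of_mem_ellipsoid hj hyE).ne hy
  have hplus := infDist_le_dist_of_mem (x := x)
    (hout (x + EuclideanSpace.single j (a j - x j)) (by simp [hj.le]))
  have hminus := infDist_le_dist_of_mem (x := x)
    (hout (x - EuclideanSpace.single j (a j + x j)) (by simp [abs_of_pos hj]))
  rw [dist_self_add_right, PiLp.norm_single, Real.norm_eq_abs, abs_of_pos (by linarith)] at hplus
  rw [dist_self_sub_right, PiLp.norm_single, Real.norm_eq_abs, abs_of_pos (by linarith)] at hminus
  linarith

theorem mem_ellipsoid_of_norm_lt {r : ℝ} (hr : 0 < r) (hra : ∀ i, r ≤ a i) (hx : ‖x‖ < r) :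
    x ∈ ellipsoid a := by
  have hle : ∑ i, (x i / a i) ^ 2 ≤ ‖x‖ ^ 2 / r ^ 2 := by
    rw [EuclideanSpace.norm_sq_eq, Finset.sum_div]
    refine Finset.sum_le_sum fun i _ ↦ ?_
    rw [div_pow, Real.norm_eq_abs, sq_abs]
    gcongr
    exact hra i
  calc ∑ i, (x i / a i) ^ 2 ≤ ‖x‖ ^ 2 / r ^ 2 := hle
    _ < 1 := by
      rw [div_lt_one (by positivity)]
      gcongr

theorem le_infDist_zero_compl_ellipsoid [Nonempty ι] {r : ℝ} (hr : 0 < r) (hra : ∀ i, r ≤ a i) :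
    r ≤ infDist 0 (ellipsoid a)ᶜ := by
  classical
  obtain ⟨j⟩ := ‹Nonempty ι›
  have hj : 0 < a j := hr.trans_le (hra j)
  have hcompl : (ellipsoid a)ᶜ.Nonempty :=
    ⟨EuclideanSpace.single j (a j),
      fun h ↦ (abs_lt_of_mem_ellipsoid hj h).ne (by simp [abs_of_pos hj])⟩
  refine (le_infDist hcompl).2 fun y hy ↦ ?_
  rw [dist_zero_left]
  exact not_lt.1 fun h ↦ hy (mem_ellipsoid_of_norm_lt hr hra h)

theorem iSup_infDist_compl_ellipsoid [Nonempty ι] (ha : ∀ i, 0 < a i) :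
    ⨆ x ∈ ellipsoid a, infDist x (ellipsoid a)ᶜ = ⨅ i, a i := by
  obtain ⟨j, hj⟩ := exists_eq_ciInf_of_finite (f := a)
  have hmin : ∀ i, a j ≤ a i := fun i ↦ hj ▸ ciInf_le (Finite.bddBelow_range a) i
  have hle : ∀ x, ⨆ _ : x ∈ ellipsoid a, infDist x (ellipsoid a)ᶜ ≤ a j :=
    fun x ↦ Real.iSup_le (infDist_compl_ellipsoid_le (ha j)) (ha j).le
  have h0 : (0 : EuclideanSpace ℝ ι) ∈ ellipsoid a :=
    mem_ellipsoid_of_norm_lt (ha j) hmin (by simpa using ha j)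
  rw [← hj]
  refine le_antisymm (ciSup_le hle) (le_ciSup_of_le ⟨a j, Set.forall_mem_range.2 hle⟩ 0 ?_)
  rw [ciSup_pos h0]
  exact le_infDist_zero_compl_ellipsoid (ha j) hmin

end

/-- The inradius of the open ellipsoid with semi-axes `a₁, …, aₙ > 0` equals
`minᵢ aᵢ`. -/
theorem stmt14 (n : ℕ) (hn : 0 < n) (a : Fin n → ℝ) (ha : ∀ i, 0 < a i) :
    haveI : Nonempty (Fin n) := Fin.pos_iff_nonempty.mp hn
    (⨆ x ∈ {x : EuclideanSpace ℝ (Fin n) | ∑ i, (x i / a i) ^ 2 < 1},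
        infDist x {x : EuclideanSpace ℝ (Fin n) | ∑ i, (x i / a i) ^ 2 < 1}ᶜ)
      = ⨅ i, a i :=
  haveI : Nonempty (Fin n) := Fin.pos_iff_nonempty.mp hn
  iSup_infDist_compl_ellipsoid ha
end
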